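/- arXiv:1911.01195 — 4 statements merged into one kernel-verified Lean document; each statement's English description precedes it below -/
import Mathlib

section
/- For any downward closed set of flows 𝓕 and any downward closed set of configurations F, the set SFP(𝓕, F) = {c ∈ ℕ^Q : c goes to some c' ∈ F via a flow word with all flows in 𝓕} is downward closed. -/
section
variable {Q : Type*} [Fintype Q]

def preFlow (f : Q × Q → ℕ) : Q → ℕ := fun p => ∑ q, f (p, q)

def postFlow (f : Q × Q → ℕ) : Q → ℕ := fun q => ∑ p, f (p, q)

inductive GoesTo : List (Q × Q → ℕ) → (Q → ℕ) → (Q → ℕ) → Prop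
  | nil (c : Q → ℕ) : GoesTo [] c c
  | cons {f : Q × Q → ℕ} {fs : List (Q × Q → ℕ)} {c c₁ c' : Q → ℕ} :
      c = preFlow f → c₁ = postFlow f → GoesTo fs c₁ c' → GoesTo (f :: fs) c c'

/-- The set of configurations from which `F` can be reached using flows in `𝓕`. -/
def SFP (𝓕 : Set (Q × Q → ℕ)) (F : Set (Q → ℕ)) : Set (Q → ℕ) :=
  {c | ∃ fs : List (Q × Q → ℕ), (∀ f ∈ fs, f ∈ 𝓕) ∧ ∃ c' ∈ F, GoesTo fs c c'}

lemma exists_split {α : Type*} [DecidableEq α] (s : Finset α) (a : α → ℕ) (n : ℕ)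
    (h : n ≤ ∑ x ∈ s, a x) :
    ∃ b : α → ℕ, b ≤ a ∧ (∑ x ∈ s, b x) = n := by
  induction s using Finset.induction_on generalizing n with
  | empty =>
    simp only [Finset.sum_empty, Nat.le_zero] at h
    exact ⟨fun _ => 0, fun x => Nat.zero_le _, by simp [h]⟩
  | insert x s hx ih =>
    rw [Finset.sum_insert hx] at h
    have h2 : n - min n (a x) ≤ ∑ y ∈ s, a y := by omega
    obtain ⟨b, hb, hsum⟩ := ih _ h2
    refine ⟨Function.update b x (min n (a x)), ?_, ?_⟩
    · intro y
      by_cases hy : y = x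
      · subst hy; simp [Function.update_self]
      · simp [Function.update_of_ne hy]; exact hb y
    · have hcg : ∑ y ∈ s, Function.update b x (min n (a x)) y = ∑ y ∈ s, b y :=
        Finset.sum_congr rfl fun y hy =>
          Function.update_of_ne (by rintro rfl; exact hx hy) _ _
      rw [Finset.sum_insert hx, Function.update_self, hcg, hsum]
      omega

lemma restrict_flow (f : Q × Q → ℕ) (c'' : Q → ℕ) (h : c'' ≤ preFlow f) :
    ∃ f' : Q × Q → ℕ, f' ≤ f ∧ preFlow f' = c'' ∧ postFlow f' ≤ postFlow f := by
  classical
  have hrow : ∀ p : Q, ∃ b : Q → ℕ, b ≤ (fun q => f (p, q)) ∧ (∑ q, b q) = c'' p := by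
    intro p
    exact exists_split Finset.univ _ _ (h p)
  choose b hb hbsum using hrow
  refine ⟨fun pq => b pq.1 pq.2, fun pq => hb pq.1 pq.2, ?_, ?_⟩
  · funext p; exact hbsum p
  · intro q
    exact Finset.sum_le_sum fun p _ => hb p q

lemma goesTo_restrict {fs : List (Q × Q → ℕ)} {c cend : Q → ℕ} (hg : GoesTo fs c cend) :
    ∀ c' : Q → ℕ, c' ≤ c → ∃ fs' : List (Q × Q → ℕ), ∃ cend' : Q → ℕ,
      (∀ g ∈ fs', ∃ f ∈ fs, g ≤ f) ∧ cend' ≤ cend ∧ GoesTo fs' c' cend' := by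
  induction hg with
  | nil c => exact fun c' hc' => ⟨[], c', by simp, hc', GoesTo.nil c'⟩
  | @cons f fs c c₁ cend hpre hpost _ ih =>
    intro c' hc'
    obtain ⟨f', hf'le, hf'pre, hf'post⟩ := restrict_flow f c' (hpre ▸ hc')
    obtain ⟨fs', cend', hmem, hle, hg'⟩ := ih (postFlow f') (hpost ▸ hf'post)
    refine ⟨f' :: fs', cend', ?_, hle, GoesTo.cons hf'pre.symm rfl hg'⟩
    intro g hg
    rcases hg with _ | hg
    · exact ⟨f, List.mem_cons_self, hf'le⟩
    · obtain ⟨f₀, hf₀, hgle⟩ := hmem g ‹_›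
      exact ⟨f₀, List.mem_cons_of_mem f hf₀, hgle⟩

/-- If `𝓕` and `F` are downward closed, then so is `SFP 𝓕 F`. -/
theorem stmt_7 (𝓕 : Set (Q × Q → ℕ)) (F : Set (Q → ℕ))
    (h𝓕 : ∀ f ∈ 𝓕, ∀ f' : Q × Q → ℕ, f' ≤ f → f' ∈ 𝓕)
    (hF : ∀ c ∈ F, ∀ c' : Q → ℕ, c' ≤ c → c' ∈ F) :
    ∀ c ∈ SFP 𝓕 F, ∀ c' : Q → ℕ, c' ≤ c → c' ∈ SFP 𝓕 F := by
  rintro c ⟨fs, hfs, cend, hcend, hg⟩ c' hc'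
  obtain ⟨fs', cend', hmem, hle, hg'⟩ := goesTo_restrict hg c' hc'
  refine ⟨fs', ?_, cend', hF cend hcend cend' hle, hg'⟩
  intro g hgmem
  obtain ⟨f, hf, hgle⟩ := hmem g hgmem
  exact h𝓕 f (hfs f hf) g hgle


end
end

section
/- Let Q be finite. Every downward closed subset X of ℕ^Q is a finite union X = ↓a₁ ∪ ... ∪ ↓aₖ of sets of the form ↓a = {c : c ≤ a} with a₁, ..., aₖ ∈ (ℕ ∪ {ω})^Q. -/
open Classical in
/-- Every downward closed subset of `ℕ^Q` is a finite union of ideals of the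
form `↓a` with `a ∈ (ℕ∞)^Q`. -/
theorem stmt_9 {Q : Type*} [Fintype Q] (X : Set (Q → ℕ))
    (hdc : ∀ c ∈ X, ∀ c' : Q → ℕ, c' ≤ c → c' ∈ X) :
    ∃ (k : ℕ) (a : Fin k → Q → ℕ∞),
      X = ⋃ j, {c : Q → ℕ | ∀ q, (c q : ℕ∞) ≤ a j q} := by
  classical
  have hPWO : ∀ s : Set (Q → ℕ), s.IsPWO := fun s =>
    Set.isPWO_of_wellQuasiOrderedLE s
  set Y : Set (Q → ℕ) := Xᶜ with hY
  -- minimal elements of Y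
  set M : Set (Q → ℕ) := {m ∈ Y | ∀ y ∈ Y, y ≤ m → y = m} with hM
  -- every element of Y dominates a minimal element
  have hdom : ∀ y ∈ Y, ∃ m ∈ M, m ≤ y := by
    intro y hy
    have hWF : Set.IsWF {z ∈ Y | z ≤ y} := (hPWO _).isWF
    have hne : {z ∈ Y | z ≤ y}.Nonempty := ⟨y, hy, le_rfl⟩
    refine ⟨hWF.min hne, ⟨(hWF.min_mem hne).1, ?_⟩, (hWF.min_mem hne).2⟩
    intro z hz hzle
    by_contra hne'
    exact hWF.not_lt_min hne ⟨hz, hzle.trans (hWF.min_mem hne).2⟩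
      (lt_of_le_of_ne hzle hne')
  -- M is a finite antichain
  have hanti : IsAntichain (· ≤ ·) M := by
    intro m hm m' hm' hne hle
    exact hne (hm'.2 m hm.1 hle)
  have hMfin : M.Finite :=
    hanti.finite_of_partiallyWellOrderedOn (hPWO M)
  haveI : Fintype M := hMfin.fintype
  -- the family of ideals
  set g : (M → Q) → (Q → ℕ∞) := fun f q =>
    ⨅ (m : M) (_ : f m = q), ((((m : Q → ℕ) q - 1 : ℕ) : ℕ∞)) with hg
  set A : Set (Q → ℕ∞) :=
    {a | ∃ f : M → Q, (∀ m : M, 1 ≤ (m : Q → ℕ) (f m)) ∧ a = g f} with hA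
  have hAfin : A.Finite := by
    have : A ⊆ Set.range g := by rintro a ⟨f, _, rfl⟩; exact ⟨f, rfl⟩
    exact (Set.finite_range g).subset this
  have hXU : X = ⋃ a ∈ A, {c : Q → ℕ | ∀ q, (c q : ℕ∞) ≤ a q} := by
    ext c
    constructor
    · intro hc
      -- choose for each minimal m a coordinate where c is strictly below m
      have hch : ∀ m : M, ∃ q, c q < (m : Q → ℕ) q := by
        intro m
        by_contra h
        push_neg at h
        exact (m.2.1 : (m : Q → ℕ) ∈ Y) (hdc c hc m h)
      choose f hf using hch
      refine Set.mem_iUnion₂.2 ⟨g f, ⟨f, fun m => Nat.one_le_iff_ne_zero.2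
        (fun h0 => by simpa [h0] using hf m), rfl⟩, ?_⟩
      intro q
      refine le_iInf fun m => le_iInf fun hm => ?_
      have : c q ≤ (m : Q → ℕ) q - 1 := by
        have := hf m; rw [hm] at this; omega
      exact_mod_cast this
    · intro hc
      rcases Set.mem_iUnion₂.1 hc with ⟨a, ⟨f, hval, rfl⟩, hca⟩
      by_contra hcX
      rcases hdom c hcX with ⟨m, hmM, hmc⟩
      set mm : M := ⟨m, hmM⟩
      have h1 : (c (f mm) : ℕ∞) ≤ ((m (f mm) - 1 : ℕ) : ℕ∞) :=
        (hca (f mm)).trans ((iInf_le _ mm).trans (iInf_le _ rfl))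
      have h2 : c (f mm) ≤ m (f mm) - 1 := by exact_mod_cast h1
      have h3 : 1 ≤ m (f mm) := hval mm
      have h4 : m (f mm) ≤ c (f mm) := hmc (f mm)
      omega
  -- convert the finite union to an indexed union over `Fin k`
  haveI : Fintype A := hAfin.fintype
  refine ⟨Fintype.card A, fun j => ((Fintype.equivFin A).symm j : Q → ℕ∞), ?_⟩
  rw [hXU]
  ext c
  simp only [Set.mem_iUnion, Set.mem_setOf_eq]
  constructor
  · rintro ⟨a, ha, hc⟩
    exact ⟨Fintype.equivFin A ⟨a, ha⟩, by simpa using hc⟩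
  · rintro ⟨j, hc⟩
    exact ⟨_, ((Fintype.equivFin A).symm j).2, hc⟩
end

section
/- Max-flow min-cut (integer version) on a finite directed graph with capacities in ℕ ∪ {ω}: the maximum value of an integer-valued (s,t)-flow respecting the capacities equals the minimum cost of an (s,t)-cut, whenever some (s,t)-cut has finite cost. -/
section
variable {V : Type*} [Fintype V] [DecidableEq V]

/-- `f` is an integer `(s,t)`-flow respecting the capacity `a`. -/
def IsFlow (a : V × V → ℕ∞) (s t : V) (f : V × V → ℕ) : Prop :=
  (∀ v : V, v ≠ s → v ≠ t → ∑ u, f (u, v) = ∑ u, f (v, u)) ∧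
  (∀ e, (f e : ℕ∞) ≤ a e)

/-- `C` is an `(s,t)`-cut: removing the edges of `C` leaves no directed path
from `s` to `t` along edges of positive capacity. -/
def IsCut (a : V × V → ℕ∞) (s t : V) (C : Finset (V × V)) : Prop :=
  ¬ Relation.ReflTransGen (fun u v => 0 < a (u, v) ∧ (u, v) ∉ C) s t

/-- The cost of a cut. -/
def cutCost (a : V × V → ℕ∞) (C : Finset (V × V)) : ℕ∞ := ∑ e ∈ C, a e

omit [Fintype V] [DecidableEq V] in
lemma exists_nodup_chain' {r : V → V → Prop} {s t : V} (h : Relation.ReflTransGen r s t) :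
    ∃ l : List V, List.Chain r s l ∧ (s::l).Nodup ∧ (s::l).getLast (by simp) = t := by
  induction h using Relation.ReflTransGen.head_induction_on with
  | refl => exact ⟨[], List.Chain.nil, List.nodup_singleton t, rfl⟩
  | @head x c hac hcb ih =>
    obtain ⟨l, hch, hnd, hlast⟩ := ih
    by_cases hx : x ∈ c :: l
    · obtain ⟨l1, l2, hdec⟩ := List.append_of_mem hx
      have hch' : List.Chain' r (c :: l) := hch
      have hsuf : (x :: l2) <:+ (c :: l) := hdec ▸ List.suffix_append l1 (x :: l2)
      refine ⟨l2, hch'.suffix hsuf, hnd.sublist hsuf.sublist, ?_⟩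
      rw [← hlast, List.getLast_congr _ _ hdec]
      exact (List.getLast_append_right (l := l1) (l' := x :: l2) (by simp)).symm
    · exact ⟨c :: l, List.chain_cons.2 ⟨hac, hch⟩, List.nodup_cons.2 ⟨hx, hnd⟩,
        by rw [List.getLast_cons (by simp)]; exact hlast⟩

lemma sum_ite_pair (p q v : V) (c : ℤ) :
    (∑ u : V, if (u,v) = (p,q) then c else 0) = if v = q then c else 0 := by
  by_cases h : v = q
  · subst h; simp [Prod.ext_iff]
  · simp [Prod.ext_iff, h]

lemma sum_ite_pair' (p q v : V) (c : ℤ) :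
    (∑ u : V, if (v,u) = (p,q) then c else 0) = if v = p then c else 0 := by
  by_cases h : v = p
  · subst h; simp [Prod.ext_iff]
  · simp [Prod.ext_iff, h]

lemma aug (a : V × V → ℕ∞) (f : V × V → ℕ)
    (hf : ∀ e, (f e : ℕ∞) ≤ a e) :
    ∀ (l : List V) (x : V),
    List.Chain (fun u v => (f (u,v) : ℕ∞) < a (u,v) ∨ 0 < f (v,u)) x l →
    (x::l).Nodup →
    ∃ g : V × V → ℤ,
      (∀ e, 0 ≤ (f e : ℤ) + g e) ∧
      (∀ e, (((f e : ℤ) + g e).toNat : ℕ∞) ≤ a e) ∧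
      (∀ e, g e ≠ 0 → e.1 ∈ x::l ∧ e.2 ∈ x::l) ∧
      (∀ v, (∑ u, g (u,v)) - (∑ u, g (v,u)) =
        (if v = (x::l).getLast (by simp) then 1 else 0) - (if v = x then 1 else 0)) := by
  intro l
  induction l with
  | nil =>
    intro x _ _
    refine ⟨0, by simp, by simpa using hf, by simp, ?_⟩
    intro v
    simp
    by_cases h : v = x <;> simp [h]
  | cons y l ih =>
    intro x hch hnd
    obtain ⟨hxy, hch'⟩ := List.chain_cons.1 hch
    have hxmem : x ∉ y :: l := (List.nodup_cons.1 hnd).1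
    obtain ⟨g2, h1, h2, h3, h4⟩ := ih y hch' (List.nodup_cons.1 hnd).2
    have hg2x : ∀ e : V × V, e.1 = x ∨ e.2 = x → g2 e = 0 := by
      intro e he
      by_contra hne
      rcases he with he | he <;> [exact hxmem (he ▸ (h3 e hne).1); exact hxmem (he ▸ (h3 e hne).2)]
    have hlast : (x :: y :: l).getLast (by simp) = (y :: l).getLast (by simp) :=
      List.getLast_cons (by simp)
    by_cases hfw : (f (x,y) : ℕ∞) < a (x,y)
    · refine ⟨fun e => (if e = (x,y) then 1 else 0) + g2 e, ?_, ?_, ?_, ?_⟩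
      · intro e
        by_cases he : e = (x,y)
        · subst he
          simp only [if_pos rfl, if_true, hg2x (x,y) (Or.inl rfl)]
          positivity
        · simp only [he, if_neg, if_false, zero_add]; exact h1 e
      · intro e
        by_cases he : e = (x,y)
        · subst he
          simp only [if_pos rfl, if_true, hg2x (x,y) (Or.inl rfl)]
          have h9 : (((f (x,y) : ℤ) + (1 + 0)).toNat : ℕ∞) = (f (x,y) : ℕ∞) + 1 := by
            rw [show ((f (x,y) : ℤ) + (1+0)).toNat = f (x,y) + 1 by omega]
            push_cast; ring
          rw [h9]
          exact (ENat.add_one_le_iff (ENat.coe_ne_top _)).2 hfw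
        · simp only [he, if_false, zero_add]; exact h2 e
      · intro e hge
        by_cases he : e = (x,y)
        · subst he; constructor <;> simp
        · simp only [he, if_false, zero_add] at hge
          exact ⟨List.mem_cons_of_mem _ (h3 e hge).1, List.mem_cons_of_mem _ (h3 e hge).2⟩
      · intro v
        simp only []
        rw [Finset.sum_add_distrib, Finset.sum_add_distrib, sum_ite_pair x y v 1,
          sum_ite_pair' x y v 1, hlast]
        linarith [h4 v]
    · have hbk : 0 < f (y,x) := hxy.resolve_left hfw
      refine ⟨fun e => (if e = (y,x) then -1 else 0) + g2 e, ?_, ?_, ?_, ?_⟩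
      · intro e
        by_cases he : e = (y,x)
        · subst he
          simp only [if_pos rfl, if_true, hg2x (y,x) (Or.inr rfl)]
          omega
        · simp only [he, if_false, zero_add]; exact h1 e
      · intro e
        by_cases he : e = (y,x)
        · subst he
          simp only [if_pos rfl, if_true, hg2x (y,x) (Or.inr rfl)]
          have h0 : (((f (y,x) : ℤ) + (-1 + 0)).toNat) = f (y,x) - 1 := by omega
          rw [h0]
          exact le_trans (by exact_mod_cast Nat.sub_le _ _ : ((f (y,x) - 1 : ℕ) : ℕ∞) ≤ (f (y,x) : ℕ∞)) (hf (y,x))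
        · simp only [he, if_false, zero_add]; exact h2 e
      · intro e hge
        by_cases he : e = (y,x)
        · subst he; constructor <;> simp
        · simp only [he, if_false, zero_add] at hge
          exact ⟨List.mem_cons_of_mem _ (h3 e hge).1, List.mem_cons_of_mem _ (h3 e hge).2⟩
      · intro v
        simp only []
        rw [Finset.sum_add_distrib, Finset.sum_add_distrib, sum_ite_pair y x v (-1),
          sum_ite_pair' y x v (-1), hlast]
        have e1 : (if v = x then (-1:ℤ) else 0) = -(if v = x then 1 else 0) := by
          by_cases h : v = x <;> simp [h]
        have e2 : (if v = y then (-1:ℤ) else 0) = -(if v = y then 1 else 0) := by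
          by_cases h : v = y <;> simp [h]
        rw [e1, e2]
        linarith [h4 v]

lemma netflow (a : V × V → ℕ∞) (s t : V) (f : V × V → ℕ)
    (hf : IsFlow a s t f) (hins : ∀ v, a (v, s) = 0)
    (S0 : Finset V) (hs : s ∈ S0) (ht : t ∉ S0) :
    ∑ v ∈ S0, ∑ u ∈ S0ᶜ, f (v,u) = (∑ v ∈ S0, ∑ u ∈ S0ᶜ, f (u,v)) + ∑ u, f (s,u) := by
  obtain ⟨hcons, hcap⟩ := hf
  have hfs : ∀ u, f (u,s) = 0 := by
    intro u
    have := hcap (u,s)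
    rw [hins u] at this
    exact_mod_cast nonpos_iff_eq_zero.mp this
  have key : ∑ v ∈ S0, (∑ u, f (v,u)) = (∑ v ∈ S0, ∑ u, f (u,v)) + ∑ u, f (s,u) := by
    rw [← Finset.add_sum_erase _ _ hs, ← Finset.add_sum_erase _ (fun v => ∑ u, f (u,v)) hs]
    have h1 : ∑ u, f (u,s) = 0 := by simp [hfs]
    have h2 : ∑ v ∈ S0.erase s, ∑ u, f (v,u) = ∑ v ∈ S0.erase s, ∑ u, f (u,v) :=
      Finset.sum_congr rfl fun v hv =>
        (hcons v (Finset.ne_of_mem_erase hv)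
          (fun h => ht (h ▸ Finset.mem_of_mem_erase hv))).symm
    rw [h1, h2]
    omega
  have split1 : ∀ v, ∑ u, f (v,u) = ∑ u ∈ S0, f (v,u) + ∑ u ∈ S0ᶜ, f (v,u) :=
    fun v => (Finset.sum_add_sum_compl S0 _).symm
  have split2 : ∀ v, ∑ u, f (u,v) = ∑ u ∈ S0, f (u,v) + ∑ u ∈ S0ᶜ, f (u,v) :=
    fun v => (Finset.sum_add_sum_compl S0 _).symm
  simp only [split1, split2, Finset.sum_add_distrib] at key
  have hA : ∑ v ∈ S0, ∑ u ∈ S0, f (v,u) = ∑ v ∈ S0, ∑ u ∈ S0, f (u,v) :=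
    Finset.sum_comm
  have hvs : ∑ u, f (s,u) = ∑ u ∈ S0, f (s,u) + ∑ u ∈ S0ᶜ, f (s,u) := split1 s
  omega

lemma weak_duality (a : V × V → ℕ∞) (s t : V) (hins : ∀ v, a (v, s) = 0)
    (f : V × V → ℕ) (hf : IsFlow a s t f)
    (C : Finset (V × V)) (hC : IsCut a s t C) :
    ((∑ v, f (s, v) : ℕ) : ℕ∞) ≤ cutCost a C := by
  classical
  set r : V → V → Prop := fun u v => 0 < a (u, v) ∧ (u, v) ∉ C with hr
  set S0 : Finset V := Finset.univ.filter (fun v => Relation.ReflTransGen r s v) with hS0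
  have hs : s ∈ S0 := by
    simp only [hS0, Finset.mem_filter, Finset.mem_univ, true_and]
    exact Relation.ReflTransGen.refl
  have ht : t ∉ S0 := by simp [hS0]; exact hC
  have hstep : ∀ v ∈ S0, ∀ u, u ∉ S0 → (v,u) ∉ C → a (v,u) = 0 := by
    intro v hv u hu hvu
    by_contra hpos
    exact hu (by
      simp only [hS0, Finset.mem_filter, Finset.mem_univ, true_and] at hv ⊢
      exact hv.tail ⟨pos_iff_ne_zero.mpr hpos, hvu⟩)
  have hnf := netflow a s t f hf hins S0 hs ht
  have hle : (∑ v, f (s,v)) ≤ ∑ v ∈ S0, ∑ u ∈ S0ᶜ, f (v,u) := by omega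
  calc ((∑ v, f (s, v) : ℕ) : ℕ∞) ≤ ((∑ v ∈ S0, ∑ u ∈ S0ᶜ, f (v,u) : ℕ) : ℕ∞) := by
        exact_mod_cast hle
    _ = ∑ v ∈ S0, ∑ u ∈ S0ᶜ, ((f (v,u) : ℕ) : ℕ∞) := by push_cast; rfl
    _ ≤ ∑ v ∈ S0, ∑ u ∈ S0ᶜ, (if (v,u) ∈ C then a (v,u) else 0) := by
        refine Finset.sum_le_sum fun v hv => Finset.sum_le_sum fun u hu => ?_
        by_cases hmem : (v,u) ∈ C
        · simpa [hmem] using hf.2 (v,u)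
        · have h0 : a (v,u) = 0 := hstep v hv u (by simpa using hu) hmem
          simp only [hmem, if_false]
          have := hf.2 (v,u)
          rw [h0] at this
          exact this
    _ = ∑ e ∈ (S0 ×ˢ S0ᶜ) ∩ C, a e := by
        rw [← Finset.sum_product']
        exact Finset.sum_ite_mem _ _ _
    _ ≤ cutCost a C := Finset.sum_le_sum_of_subset Finset.inter_subset_right

/-- Max-flow min-cut (integer version): assuming no edges into `s` and no edges
out of `t`, if some `(s,t)`-cut has finite cost then the supremum of values of
integer flows respecting `a` equals the infimum of costs of `(s,t)`-cuts. -/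
theorem stmt_11 (a : V × V → ℕ∞) (s t : V) (hst : s ≠ t)
    (hins : ∀ v, a (v, s) = 0) (houtt : ∀ v, a (t, v) = 0)
    (hfin : ∃ C : Finset (V × V), IsCut a s t C ∧ cutCost a C ≠ ⊤) :
    sSup ((fun f : V × V → ℕ => ((∑ v, f (s, v) : ℕ) : ℕ∞)) '' {f | IsFlow a s t f}) =
      sInf (cutCost a '' {C : Finset (V × V) | IsCut a s t C}) := by
  classical
  obtain ⟨C0, hC0cut, hC0fin⟩ := hfin
  set VS : Set ℕ := {n | ∃ f : V × V → ℕ, IsFlow a s t f ∧ ∑ v, f (s,v) = n} with hVS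
  have h0 : 0 ∈ VS := ⟨fun _ => 0, ⟨fun v _ _ => rfl, fun e => by simp⟩, by simp⟩
  have hbdd : BddAbove VS := by
    refine ⟨(cutCost a C0).toNat, ?_⟩
    rintro n ⟨f, hf, hv⟩
    have hwd := weak_duality a s t hins f hf C0 hC0cut
    rw [hv, ← ENat.coe_toNat hC0fin] at hwd
    exact_mod_cast hwd
  have hmem := Nat.sSup_mem ⟨0, h0⟩ hbdd
  set m := sSup VS with hm
  obtain ⟨fmax, hfmax, hval⟩ := hmem
  set rel : V → V → Prop := fun u v => (fmax (u,v) : ℕ∞) < a (u,v) ∨ 0 < fmax (v,u) with hrel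
  set S0 : Finset V := Finset.univ.filter (fun v => Relation.ReflTransGen rel s v) with hS0
  have hs : s ∈ S0 := by
    simp only [hS0, Finset.mem_filter, Finset.mem_univ, true_and]
    exact Relation.ReflTransGen.refl
  have hfmax_ins : ∀ u, fmax (u,s) = 0 := by
    intro u
    have := hfmax.2 (u,s)
    rw [hins u] at this
    exact_mod_cast nonpos_iff_eq_zero.mp this
  have ht : t ∉ S0 := by
    intro htmem
    have hreach : Relation.ReflTransGen rel s t := by
      simpa only [hS0, Finset.mem_filter, Finset.mem_univ, true_and] using htmem
    obtain ⟨l, hch, hnd, hlast⟩ := exists_nodup_chain' hreach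
    obtain ⟨g, h1, h2, h3, h4⟩ := aug a fmax hfmax.2 l s hch hnd
    have hgl : ∀ (h : (s::l) ≠ []), (s::l).getLast h = t :=
      fun h => (List.getLast_congr h (by simp) rfl).trans hlast
    have h4' : ∀ v, (∑ u, g (u,v)) - (∑ u, g (v,u)) =
        (if v = t then 1 else 0) - (if v = s then 1 else 0) := by
      intro v
      rw [h4 v, hgl]
    set f' : V × V → ℕ := fun e => ((fmax e : ℤ) + g e).toNat with hf'
    have hcast : ∀ e, ((f' e : ℤ)) = (fmax e : ℤ) + g e := fun e => Int.toNat_of_nonneg (h1 e)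
    have hflow' : IsFlow a s t f' := by
      constructor
      · intro v hvs hvt
        have key : ((∑ u, f' (u,v) : ℕ) : ℤ) = ((∑ u, f' (v,u) : ℕ) : ℤ) := by
          push_cast [hcast]
          rw [Finset.sum_add_distrib, Finset.sum_add_distrib]
          have hc := hfmax.1 v hvs hvt
          have hd := h4' v
          simp only [if_neg hvs, if_neg hvt] at hd
          have hc' : ((∑ u, fmax (u,v) : ℕ) : ℤ) = ((∑ u, fmax (v,u) : ℕ) : ℤ) := by
            exact_mod_cast hc
          push_cast at hc'
          linarith
        exact_mod_cast key
      · intro e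
        exact h2 e
    have hval' : ∑ v, f' (s,v) = m + 1 := by
      have hgs : ∀ u, g (u,s) = 0 := by
        intro u
        have ha := h2 (u,s)
        rw [hins u] at ha
        have h1' := h1 (u,s)
        have hf0 : fmax (u,s) = 0 := hfmax_ins u
        have htn : ((fmax (u,s) : ℤ) + g (u,s)).toNat = 0 := by
          have := nonpos_iff_eq_zero.mp ha
          exact_mod_cast this
        omega
      have hdiv := h4' s
      simp only [if_neg hst, if_pos rfl, if_true] at hdiv
      have hsum0 : ∑ u, g (u,s) = 0 := by simp [hgs]
      have hsumg : ∑ u, g (s,u) = 1 := by linarith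
      have key : ((∑ v, f' (s,v) : ℕ) : ℤ) = (m : ℤ) + 1 := by
        push_cast [hcast]
        rw [Finset.sum_add_distrib]
        have hv' : ((∑ v, fmax (s,v) : ℕ) : ℤ) = (m : ℤ) := by exact_mod_cast hval
        push_cast at hv'
        linarith
      exact_mod_cast key
    have hmm : m + 1 ∈ VS := ⟨f', hflow', hval'⟩
    have := le_csSup hbdd hmm
    omega
  have hnf := netflow a s t fmax hfmax hins S0 hs ht
  have hBin : ∑ v ∈ S0, ∑ u ∈ S0ᶜ, fmax (u,v) = 0 := by
    refine Finset.sum_eq_zero fun v hv => Finset.sum_eq_zero fun u hu => ?_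
    by_contra h
    have hpos : 0 < fmax (u,v) := Nat.pos_of_ne_zero h
    have hvS : Relation.ReflTransGen rel s v := by
      simpa only [hS0, Finset.mem_filter, Finset.mem_univ, true_and] using hv
    have huS : Relation.ReflTransGen rel s u := hvS.tail (Or.inr hpos)
    have : u ∈ S0 := by
      simp only [hS0, Finset.mem_filter, Finset.mem_univ, true_and]
      exact huS
    exact (Finset.mem_compl.1 hu) this
  have hBout : ∀ v ∈ S0, ∀ u ∈ S0ᶜ, (fmax (v,u) : ℕ∞) = a (v,u) := by
    intro v hv u hu
    refine le_antisymm (hfmax.2 _) ?_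
    by_contra hlt
    have hlt' : (fmax (v,u) : ℕ∞) < a (v,u) := lt_of_not_ge hlt
    have hvS : Relation.ReflTransGen rel s v := by
      simpa only [hS0, Finset.mem_filter, Finset.mem_univ, true_and] using hv
    have huS : Relation.ReflTransGen rel s u := hvS.tail (Or.inl hlt')
    exact (Finset.mem_compl.1 hu) (by
      simp only [hS0, Finset.mem_filter, Finset.mem_univ, true_and]
      exact huS)
  set C : Finset (V × V) := S0 ×ˢ S0ᶜ with hC
  have hCcut : IsCut a s t C := by
    intro hpath
    have hreach : ∀ v, Relation.ReflTransGen (fun u v => 0 < a (u,v) ∧ (u,v) ∉ C) s v → v ∈ S0 := by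
      intro v hv
      induction hv with
      | refl => exact hs
      | tail hp hstep ih =>
        rename_i mid w
        by_contra hw
        exact hstep.2 (Finset.mem_product.2 ⟨ih, Finset.mem_compl.2 hw⟩)
    exact ht (hreach t hpath)
  have hcost : cutCost a C = (m : ℕ∞) := by
    have e1 : cutCost a C = ∑ v ∈ S0, ∑ u ∈ S0ᶜ, a (v,u) := by
      rw [cutCost, hC, Finset.sum_product]
    have e2 : ∑ v ∈ S0, ∑ u ∈ S0ᶜ, a (v,u) = ∑ v ∈ S0, ∑ u ∈ S0ᶜ, ((fmax (v,u) : ℕ) : ℕ∞) :=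
      Finset.sum_congr rfl fun v hv => Finset.sum_congr rfl fun u hu => (hBout v hv u hu).symm
    have e3 : ∑ v ∈ S0, ∑ u ∈ S0ᶜ, ((fmax (v,u) : ℕ) : ℕ∞) =
        ((∑ v ∈ S0, ∑ u ∈ S0ᶜ, fmax (v,u) : ℕ) : ℕ∞) := by push_cast; rfl
    rw [e1, e2, e3]
    rw [hnf, hBin, hval]
    norm_num
  apply le_antisymm
  · refine sSup_le ?_
    rintro x ⟨f, hf, rfl⟩
    refine le_sInf ?_
    rintro y ⟨D, hD, rfl⟩
    exact weak_duality a s t hins f hf D hD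
  · refine le_trans (sInf_le ⟨C, hCcut, rfl⟩) ?_
    rw [hcost]
    exact le_sSup ⟨fmax, hfmax, by simp only [hval]⟩
end
end

section
/- For a finite directed graph given by a capacity a ∈ (ℕ∞)^(V×V) with source s and target t, if every (s,t)-cut has cost ≥ n (n ∈ ℕ), then there is an integer (s,t)-flow respecting a of value ≥ n; conversely, if there is an (s,t)-flow of value n respecting a, then every (s,t)-cut has cost ≥ n. -/
section
variable {V : Type*} [Fintype V] [DecidableEq V]

/-- The value of a flow: net outflow of `s`. -/
def flowValue (s : V) (f : V × V → ℕ) : ℕ := ∑ v, f (s, v) - ∑ v, f (v, s)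

end

set_option linter.unusedSectionVars false

open Finset

namespace MFMCaux
variable {V : Type*} [Fintype V] [DecidableEq V]

def out (f : V × V → ℕ) (v : V) : ℕ := ∑ u, f (v, u)
def inn (f : V × V → ℕ) (v : V) : ℕ := ∑ u, f (u, v)
def res (a : V × V → ℕ∞) (f : V × V → ℕ) (e : V × V) : ℕ∞ :=
  (a e - (f e : ℕ∞)) + (f (e.2, e.1) : ℕ∞)

lemma sum_update (g : V → ℕ) (q : V) (c : ℕ) :
    (∑ u, Function.update g q c u) + g q = (∑ u, g u) + c := by
  rw [Finset.sum_update_of_mem (mem_univ q)]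
  have h2 : (∑ u, g u) = g q + ∑ u ∈ univ.erase q, g u :=
    (Finset.add_sum_erase _ g (mem_univ q)).symm
  rw [Finset.sdiff_singleton_eq_erase, h2]
  omega

lemma out_update_ne (f : V × V → ℕ) (p q v : V) (c : ℕ) (h : v ≠ p) :
    out (Function.update f (p, q) c) v = out f v :=
  Finset.sum_congr rfl fun u _ => Function.update_of_ne (by simp [h]) _ _

lemma inn_update_ne (f : V × V → ℕ) (p q v : V) (c : ℕ) (h : v ≠ q) :
    inn (Function.update f (p, q) c) v = inn f v :=
  Finset.sum_congr rfl fun u _ => Function.update_of_ne (by simp [h]) _ _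

lemma out_update_self (f : V × V → ℕ) (p q : V) (c : ℕ) :
    out (Function.update f (p, q) c) p + f (p, q) = out f p + c := by
  unfold out
  have h : ∀ u, Function.update f (p, q) c (p, u) = Function.update (fun u => f (p, u)) q c u := by
    intro u
    by_cases hu : u = q
    · subst hu; simp
    · rw [Function.update_of_ne (by simp [hu]), Function.update_of_ne hu]
  simp_rw [h]
  exact sum_update (fun u => f (p, u)) q c

lemma inn_update_self (f : V × V → ℕ) (p q : V) (c : ℕ) :
    inn (Function.update f (p, q) c) q + f (p, q) = inn f q + c := by
  unfold inn
  have h : ∀ u, Function.update f (p, q) c (u, q) = Function.update (fun u => f (u, q)) p c u := by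
    intro u
    by_cases hu : u = p
    · subst hu; simp
    · rw [Function.update_of_ne (by simp [hu]), Function.update_of_ne hu]
  simp_rw [h]
  exact sum_update (fun u => f (u, q)) p c

lemma res_update_ne (a : V × V → ℕ∞) (f : V × V → ℕ) (p q : V) (c : ℕ) (e : V × V)
    (h1 : e ≠ (p, q)) (h2 : (e.2, e.1) ≠ (p, q)) :
    res a (Function.update f (p, q) c) e = res a f e := by
  unfold res
  rw [Function.update_of_ne h1, Function.update_of_ne h2]

lemma chain_mono {R S : V → V → Prop} :
    ∀ (l : List V) (x : V), List.Chain R x l →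
      (∀ u v, u ∈ x :: l → v ∈ x :: l → R u v → S u v) → List.Chain S x l
  | [], _, _, _ => List.Chain.nil
  | y :: l, x, h, hm => by
    rcases List.chain_cons.1 h with ⟨hxy, hyl⟩
    exact List.Chain.cons (hm x y (by simp) (by simp) hxy)
      (chain_mono l y hyl fun u v hu hv hr =>
        hm u v (List.mem_cons_of_mem _ hu) (List.mem_cons_of_mem _ hv) hr)

lemma exists_nodup_chain (R : V → V → Prop) :
    ∀ (n : ℕ) (l : List V), l.length ≤ n → ∀ (x t : V), List.Chain R x l →
      (x :: l).getLast? = some t →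
      ∃ l', l'.Sublist l ∧ List.Chain R x l' ∧ (x :: l').getLast? = some t ∧
        (x :: l').Nodup := by
  intro n
  induction n with
  | zero =>
    intro l hl x t hc hlast
    have : l = [] := List.length_eq_zero_iff.1 (Nat.le_zero.1 hl)
    subst this
    exact ⟨[], List.Sublist.refl _, List.Chain.nil, hlast, by simp⟩
  | succ n ih =>
    intro l hl x t hc hlast
    by_cases hx : x ∈ l
    · obtain ⟨l₁, l₂, rfl⟩ := List.append_of_mem hx
      have hc2 : List.Chain R x l₂ := (List.isChain_cons_split.1 hc).2
      have hlen : l₂.length ≤ n := by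
        have := hl; simp [List.length_append] at this; omega
      have hlast2 : (x :: l₂).getLast? = some t := by
        have e : x :: (l₁ ++ x :: l₂) = (x :: l₁) ++ (x :: l₂) := by simp
        rw [e, List.getLast?_append] at hlast
        obtain ⟨u, hu⟩ : ∃ u, (x :: l₂).getLast? = some u :=
          ⟨_, List.getLast?_eq_getLast_of_ne_nil (List.cons_ne_nil _ _)⟩
        rw [hu] at hlast
        simpa [hu] using hlast
      obtain ⟨l', hsub, h1, h2, h3⟩ := ih l₂ hlen x t hc2 hlast2
      exact ⟨l', hsub.trans ((List.sublist_cons_self x l₂).trans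
        (List.sublist_append_right l₁ _)), h1, h2, h3⟩
    · cases l with
      | nil => exact ⟨[], List.Sublist.refl _, List.Chain.nil, hlast, by simp⟩
      | cons y l'' =>
        rcases List.chain_cons.1 hc with ⟨hxy, hyl⟩
        have hlen : l''.length ≤ n := by simp at hl; omega
        have hlast2 : (y :: l'').getLast? = some t := by
          rwa [List.getLast?_cons_cons] at hlast
        obtain ⟨m, hsub, h1, h2, h3⟩ := ih l'' hlen y t hyl hlast2
        refine ⟨y :: m, (hsub.cons_cons y), List.chain_cons.2 ⟨hxy, h1⟩, ?_, ?_⟩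
        · rwa [List.getLast?_cons_cons]
        · refine List.nodup_cons.2 ⟨fun hmem => hx ?_, h3⟩
          exact (hsub.cons_cons y).subset hmem

def ecross (S : Finset V) : Finset (V × V) :=
  Finset.univ.filter (fun e : V × V => e.1 ∈ S ∧ e.2 ∉ S)

lemma key (f : V × V → ℕ) (s : V) (S : Finset V) (hs : s ∈ S)
    (hcons : ∀ v ∈ S, v ≠ s → inn f v = out f v) :
    (∑ e ∈ ecross S, f e) + inn f s
      = (∑ e ∈ Finset.univ.filter (fun e : V × V => e.1 ∉ S ∧ e.2 ∈ S), f e) + out f s := by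
  have h1 : ∑ v ∈ S, out f v + inn f s = ∑ v ∈ S, inn f v + out f s := by
    have ho : ∑ v ∈ S, out f v = out f s + ∑ v ∈ S.erase s, out f v :=
      (Finset.add_sum_erase _ _ hs).symm
    have hi : ∑ v ∈ S, inn f v = inn f s + ∑ v ∈ S.erase s, inn f v :=
      (Finset.add_sum_erase _ _ hs).symm
    have he : ∑ v ∈ S.erase s, out f v = ∑ v ∈ S.erase s, inn f v :=
      Finset.sum_congr rfl fun v hv =>
        (hcons v (Finset.mem_of_mem_erase hv) (Finset.ne_of_mem_erase hv)).symm
    omega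
  have h2 : ∑ v ∈ S, out f v
      = (∑ e ∈ (S ×ˢ Finset.univ).filter (fun e : V × V => e.2 ∈ S), f e)
        + ∑ e ∈ ecross S, f e := by
    have e1 : ∑ v ∈ S, out f v = ∑ e ∈ S ×ˢ Finset.univ, f e := by
      unfold out; rw [Finset.sum_product]
    have e3 : (S ×ˢ Finset.univ).filter (fun e : V × V => ¬ e.2 ∈ S) = ecross S := by
      ext e; simp [ecross, Finset.mem_filter, Finset.mem_product]
    rw [e1, ← Finset.sum_filter_add_sum_filter_not (S ×ˢ Finset.univ)
      (fun e : V × V => e.2 ∈ S) f, e3]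
  have h3 : ∑ v ∈ S, inn f v
      = (∑ e ∈ (Finset.univ ×ˢ S).filter (fun e : V × V => e.1 ∈ S), f e)
        + ∑ e ∈ Finset.univ.filter (fun e : V × V => e.1 ∉ S ∧ e.2 ∈ S), f e := by
    have e1 : ∑ v ∈ S, inn f v = ∑ e ∈ Finset.univ ×ˢ S, f e := by
      unfold inn; rw [Finset.sum_product_right]
    have e3 : (Finset.univ ×ˢ S).filter (fun e : V × V => ¬ e.1 ∈ S)
        = Finset.univ.filter (fun e : V × V => e.1 ∉ S ∧ e.2 ∈ S) := by
      ext e; simp [Finset.mem_filter, Finset.mem_product, and_comm]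
    rw [e1, ← Finset.sum_filter_add_sum_filter_not (Finset.univ ×ˢ S)
      (fun e : V × V => e.1 ∈ S) f, e3]
  have h4 : (S ×ˢ Finset.univ).filter (fun e : V × V => e.2 ∈ S)
      = (Finset.univ ×ˢ S).filter (fun e : V × V => e.1 ∈ S) := by
    ext e
    simp [Finset.mem_filter, Finset.mem_product, and_comm]
  rw [h4] at h2
  omega



set_option linter.unusedSectionVars false




lemma pair_ne_swap {e : V × V} {p q : V} (h : e ≠ (q, p)) : (e.2, e.1) ≠ (p, q) := by
  intro hc
  apply h
  have h1 : e.2 = p := congrArg Prod.fst hc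
  have h2 : e.1 = q := congrArg Prod.snd hc
  exact Prod.ext h2 h1

lemma push (a : V × V → ℕ∞) (s t : V) (l : List V) :
    ∀ (x : V) (f : V × V → ℕ),
      List.Chain (fun u v => 0 < res a f (u, v)) x l →
      (x :: l).Nodup → s ∉ (x :: l) → (x :: l).getLast? = some t →
      (∀ e, (f e : ℕ∞) ≤ a e) →
      (∀ v, v ≠ s → v ≠ t → v ≠ x → inn f v = out f v) →
      (x ≠ t → inn f x = out f x + 1) →
      ∃ f', (∀ e, (f' e : ℕ∞) ≤ a e) ∧ (∀ v, v ≠ s → v ≠ t → inn f' v = out f' v)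
        ∧ inn f' s = inn f s ∧ out f' s = out f s := by
  induction l with
  | nil =>
    intro x f _ _ _ hlast hcap hcons _
    have hx : x = t := by simpa using hlast
    subst hx
    exact ⟨f, hcap, fun v hvs hvt => hcons v hvs hvt hvt, rfl, rfl⟩
  | cons y l ih =>
    intro x f hch hnd hs hlast hcap hcons hex
    rcases List.chain_cons.1 hch with ⟨hxy, hch'⟩
    have hxny : x ∉ y :: l := (List.nodup_cons.1 hnd).1
    have hnd' : (y :: l).Nodup := (List.nodup_cons.1 hnd).2
    have hlast' : (y :: l).getLast? = some t := by
      rwa [List.getLast?_cons_cons] at hlast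
    have htmem : t ∈ y :: l := by
      obtain ⟨h, he⟩ := List.mem_getLast?_eq_getLast (l := y :: l) (x := t) hlast'
      exact he ▸ List.getLast_mem h
    have hxt : x ≠ t := fun h => hxny (h ▸ htmem)
    have hsx : s ≠ x := fun h => hs (h ▸ List.mem_cons_self)
    have hsy : s ≠ y := fun h => hs (by rw [h]; exact List.mem_cons_of_mem _ (List.mem_cons_self))
    have hyx : y ≠ x := fun h => hxny (h ▸ List.mem_cons_self)
    have hsyl : s ∉ y :: l := fun h => hs (List.mem_cons_of_mem _ h)
    have hx : inn f x = out f x + 1 := hex hxt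
    obtain ⟨f₁, hA, hB, hD, hE, hC⟩ :
        ∃ f₁ : V × V → ℕ,
          (∀ e, (f₁ e : ℕ∞) ≤ a e) ∧
          (∀ e : V × V, e ≠ (x, y) → e ≠ (y, x) → res a f₁ e = res a f e) ∧
          (inn f₁ x = out f₁ x) ∧
          (y ≠ t → inn f₁ y = out f₁ y + 1) ∧
          (∀ v, v ≠ x → v ≠ y → inn f₁ v = inn f v ∧ out f₁ v = out f v) := by
      have hycons : y ≠ t → inn f y = out f y := fun hyt =>
        hcons y (Ne.symm hsy) hyt hyx
      rcases Nat.eq_zero_or_pos (f (y, x)) with hz | hpos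
      · -- increment f49 (x,y)
        have hlt : (f (x, y) : ℕ∞) < a (x, y) := by
          have h0 : 0 < a (x, y) - (f (x, y) : ℕ∞) := by
            have : res a f (x, y) = a (x, y) - (f (x, y) : ℕ∞) := by
              unfold res; simp [hz]
            rw [this] at hxy; exact hxy
          by_contra hle
          rw [not_lt] at hle
          rw [tsub_eq_zero_iff_le.2 hle] at h0
          exact lt_irrefl 0 h0
        refine ⟨Function.update f (x, y) (f (x, y) + 1), ?_, ?_, ?_, ?_, ?_⟩
        · intro e
          by_cases he : e = (x, y)
          · subst he
            rw [Function.update_self]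
            push_cast
            exact ENat.add_one_le_iff (ENat.coe_ne_top _) |>.2 hlt
          · rw [Function.update_of_ne he]; exact hcap e
        · intro e h1 h2
          exact res_update_ne a f x y _ e h1 (pair_ne_swap h2)
        · have ho := out_update_self f x y (f (x, y) + 1)
          have hi := inn_update_ne f x y x (f (x, y) + 1) hyx.symm
          omega
        · intro hyt
          have hi := inn_update_self f x y (f (x, y) + 1)
          have ho := out_update_ne f x y y (f (x, y) + 1) hyx
          have := hycons hyt
          omega
        · intro v hvx hvy
          exact ⟨inn_update_ne f x y v _ hvy, out_update_ne f x y v _ hvx⟩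
      · -- decrement f (y,x)
        refine ⟨Function.update f (y, x) (f (y, x) - 1), ?_, ?_, ?_, ?_, ?_⟩
        · intro e
          by_cases he : e = (y, x)
          · subst he
            rw [Function.update_self]
            exact le_trans (by exact_mod_cast Nat.sub_le _ 1) (hcap (y, x))
          · rw [Function.update_of_ne he]; exact hcap e
        · intro e h1 h2
          exact res_update_ne a f y x _ e h2 (pair_ne_swap h1)
        · have hi := inn_update_self f y x (f (y, x) - 1)
          have ho := out_update_ne f y x x (f (y, x) - 1) hyx.symm
          omega
        · intro hyt
          have ho := out_update_self f y x (f (y, x) - 1)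
          have hi := inn_update_ne f y x y (f (y, x) - 1) hyx
          have := hycons hyt
          omega
        · intro v hvx hvy
          exact ⟨inn_update_ne f y x v _ hvx, out_update_ne f y x v _ hvy⟩
    have hch₁ : List.Chain (fun u v => 0 < res a f₁ (u, v)) y l := by
      refine chain_mono l y hch' fun u v hu hv hr => ?_
      have hux : u ≠ x := fun h => hxny (h ▸ hu)
      have hvx : v ≠ x := fun h => hxny (h ▸ hv)
      rw [hB (u, v) (by simp [hux]) (by simp [hvx])]
      exact hr
    have hcons₁ : ∀ v, v ≠ s → v ≠ t → v ≠ y → inn f₁ v = out f₁ v := by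
      intro v hvs hvt hvy
      by_cases hvx : v = x
      · subst hvx; exact hD
      · rcases hC v hvx hvy with ⟨h1, h2⟩
        rw [h1, h2]; exact hcons v hvs hvt hvx
    obtain ⟨f', h1, h2, h3, h4⟩ := ih y f₁ hch₁ hnd' hsyl hlast' hA hcons₁ hE
    rcases hC s hsx hsy with ⟨hcs1, hcs2⟩
    exact ⟨f', h1, h2, h3.trans hcs1, h4.trans hcs2⟩



lemma augment (a : V × V → ℕ∞) (s t : V) (hst : s ≠ t) (f : V × V → ℕ)
    (hcap : ∀ e, (f e : ℕ∞) ≤ a e)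
    (hcons : ∀ v, v ≠ s → v ≠ t → inn f v = out f v)
    (hw : Relation.ReflTransGen (fun u v => 0 < res a f (u, v)) s t) :
    ∃ f', (∀ e, (f' e : ℕ∞) ≤ a e) ∧ (∀ v, v ≠ s → v ≠ t → inn f' v = out f' v) ∧
      out f' s + inn f s = out f s + inn f' s + 1 := by
  obtain ⟨l0, hch0, hlast0⟩ := List.exists_isChain_cons_of_relationReflTransGen hw
  have hlast0' : (s :: l0).getLast? = some t := by
    rw [List.getLast?_eq_getLast_of_ne_nil (List.cons_ne_nil _ _)]
    exact congrArg some hlast0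
  obtain ⟨l, hsub, hch, hlast, hnd⟩ :=
    exists_nodup_chain _ l0.length l0 le_rfl s t hch0 hlast0'
  cases l with
  | nil => exact absurd (by simpa using hlast) hst
  | cons y l' =>
    rcases List.chain_cons.1 hch with ⟨hsy, hch'⟩
    have hsny : s ∉ y :: l' := (List.nodup_cons.1 hnd).1
    have hnd' : (y :: l').Nodup := (List.nodup_cons.1 hnd).2
    have hys : y ≠ s := fun h => hsny (h ▸ List.mem_cons_self)
    have hlast' : (y :: l').getLast? = some t := by
      rwa [List.getLast?_cons_cons] at hlast
    obtain ⟨f₁, hA, hB, hD, hE, hC⟩ :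
        ∃ f₁ : V × V → ℕ,
          (∀ e, (f₁ e : ℕ∞) ≤ a e) ∧
          (∀ e : V × V, e ≠ (s, y) → e ≠ (y, s) → res a f₁ e = res a f e) ∧
          (out f₁ s + inn f s = out f s + inn f₁ s + 1) ∧
          (y ≠ t → inn f₁ y = out f₁ y + 1) ∧
          (∀ v, v ≠ s → v ≠ y → inn f₁ v = inn f v ∧ out f₁ v = out f v) := by
      have hycons : y ≠ t → inn f y = out f y := fun hyt => hcons y hys hyt
      rcases Nat.eq_zero_or_pos (f (y, s)) with hz | hpos
      · -- increment f (s,y)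
        have hlt : (f (s, y) : ℕ∞) < a (s, y) := by
          have h0 : 0 < a (s, y) - (f (s, y) : ℕ∞) := by
            have he : res a f (s, y) = a (s, y) - (f (s, y) : ℕ∞) := by
              unfold res; simp [hz]
            rw [he] at hsy; exact hsy
          by_contra hle
          rw [not_lt] at hle
          rw [tsub_eq_zero_iff_le.2 hle] at h0
          exact lt_irrefl 0 h0
        refine ⟨Function.update f (s, y) (f (s, y) + 1), ?_, ?_, ?_, ?_, ?_⟩
        · intro e
          by_cases he : e = (s, y)
          · subst he
            rw [Function.update_self]
            push_cast
            exact ENat.add_one_le_iff (ENat.coe_ne_top _) |>.2 hlt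
          · rw [Function.update_of_ne he]; exact hcap e
        · intro e h1 h2
          exact res_update_ne a f s y _ e h1 (pair_ne_swap h2)
        · have ho := out_update_self f s y (f (s, y) + 1)
          have hi := inn_update_ne f s y s (f (s, y) + 1) hys.symm
          omega
        · intro hyt
          have hi := inn_update_self f s y (f (s, y) + 1)
          have ho := out_update_ne f s y y (f (s, y) + 1) hys
          have := hycons hyt
          omega
        · intro v hvs hvy
          exact ⟨inn_update_ne f s y v _ hvy, out_update_ne f s y v _ hvs⟩
      · -- decrement f (y,s)
        refine ⟨Function.update f (y, s) (f (y, s) - 1), ?_, ?_, ?_, ?_, ?_⟩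
        · intro e
          by_cases he : e = (y, s)
          · subst he
            rw [Function.update_self]
            exact le_trans (by exact_mod_cast Nat.sub_le _ 1) (hcap (y, s))
          · rw [Function.update_of_ne he]; exact hcap e
        · intro e h1 h2
          exact res_update_ne a f y s _ e h2 (pair_ne_swap h1)
        · have hi := inn_update_self f y s (f (y, s) - 1)
          have ho := out_update_ne f y s s (f (y, s) - 1) hys.symm
          omega
        · intro hyt
          have ho := out_update_self f y s (f (y, s) - 1)
          have hi := inn_update_ne f y s y (f (y, s) - 1) hys
          have := hycons hyt
          omega
        · intro v hvs hvy
          exact ⟨inn_update_ne f y s v _ hvs, out_update_ne f y s v _ hvy⟩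
    have hch₁ : List.Chain (fun u v => 0 < res a f₁ (u, v)) y l' := by
      refine chain_mono l' y hch' fun u v hu hv hr => ?_
      have hus : u ≠ s := fun h => hsny (h ▸ hu)
      have hvs : v ≠ s := fun h => hsny (h ▸ hv)
      rw [hB (u, v) (by simp [hus]) (by simp [hvs])]
      exact hr
    have hcons₁ : ∀ v, v ≠ s → v ≠ t → v ≠ y → inn f₁ v = out f₁ v := by
      intro v hvs hvt hvy
      rcases hC v hvs hvy with ⟨h1, h2⟩
      rw [h1, h2]; exact hcons v hvs hvt
    obtain ⟨f', h1, h2, h3, h4⟩ := push a s t l' y f₁ hch₁ hnd' hsny hlast' hA hcons₁ hE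

    exact ⟨f', h1, h2, by omega⟩

lemma cast_sum_eq (C : Finset (V × V)) (f : V × V → ℕ) :
    ((∑ e ∈ C, f e : ℕ) : ℕ∞) = ∑ e ∈ C, (f e : ℕ∞) := by
  exact_mod_cast Nat.cast_sum C f

lemma main (a : V × V → ℕ∞) (s t : V) (hst : s ≠ t) :
    ∀ k : ℕ, (∀ C : Finset (V × V), IsCut a s t C → (k : ℕ∞) ≤ cutCost a C) →
      ∃ f : V × V → ℕ, (∀ e, (f e : ℕ∞) ≤ a e) ∧
        (∀ v, v ≠ s → v ≠ t → inn f v = out f v) ∧ inn f s + k ≤ out f s := by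
  intro k
  induction k with
  | zero =>
    intro _
    exact ⟨fun _ => 0, fun e => by simp, fun v _ _ => by simp [inn, out], by simp [inn, out]⟩
  | succ k ih =>
    intro hcut
    obtain ⟨f, hcap, hcons, hval⟩ := ih fun C hC =>
      le_trans (by exact_mod_cast Nat.le_succ k) (hcut C hC)
    by_cases hw : Relation.ReflTransGen (fun u v => 0 < res a f (u, v)) s t
    · obtain ⟨f', h1, h2, h3⟩ := augment a s t hst f hcap hcons hw
      exact ⟨f', h1, h2, by omega⟩
    · classical
      set S : Finset V :=
        Finset.univ.filter (fun v => Relation.ReflTransGen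
          (fun u v => 0 < res a f (u, v)) s v) with hS
      have hmemS : ∀ v, v ∈ S ↔ Relation.ReflTransGen
          (fun u v => 0 < res a f (u, v)) s v := by
        intro v; simp [hS]
      have hsS : s ∈ S := (hmemS s).2 Relation.ReflTransGen.refl
      have htS : t ∉ S := fun h => hw ((hmemS t).1 h)
      have hcutS : IsCut a s t (ecross S) := by
        intro hpath
        have hstay : ∀ v, Relation.ReflTransGen
            (fun u v => 0 < a (u, v) ∧ (u, v) ∉ ecross S) s v → v ∈ S := by
          intro v hv
          induction hv with
          | refl => exact hsS
          | tail _ hstep ihv =>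
            rename_i b c _
            by_cases hcS : c ∈ S
            · exact hcS
            · exact absurd (Finset.mem_filter.2 ⟨Finset.mem_univ _, ihv, hcS⟩) hstep.2
        exact htS (hstay t hpath)
      have hcost := hcut (ecross S) hcutS
      have hres0 : ∀ e ∈ ecross S, res a f e = 0 := by
        intro e he
        rcases Finset.mem_filter.1 he with ⟨_, h1, h2⟩
        by_contra hne
        have hpos : 0 < res a f e := pos_iff_ne_zero.2 hne
        have : e.2 ∈ S := (hmemS e.2).2 (((hmemS e.1).1 h1).tail (by
          simpa using hpos))
        exact h2 this
      have hae : ∀ e ∈ ecross S, a e = (f e : ℕ∞) := by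
        intro e he
        have h0 := hres0 e he
        unfold res at h0
        rcases add_eq_zero.1 h0 with ⟨h1, _⟩
        exact le_antisymm (tsub_eq_zero_iff_le.1 h1) (hcap e)
      have hcost2 : ((k : ℕ) + 1 : ℕ∞) ≤ ((∑ e ∈ ecross S, f e : ℕ) : ℕ∞) := by
        rw [cast_sum_eq]
        calc ((k : ℕ) + 1 : ℕ∞) ≤ cutCost a (ecross S) := by exact_mod_cast hcost
        _ = ∑ e ∈ ecross S, (f e : ℕ∞) := Finset.sum_congr rfl hae
      have hEio : k + 1 ≤ ∑ e ∈ ecross S, f e := by exact_mod_cast hcost2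
      have hEoi : ∑ e ∈ Finset.univ.filter (fun e : V × V => e.1 ∉ S ∧ e.2 ∈ S), f e = 0 := by
        refine Finset.sum_eq_zero fun e he => ?_
        rcases Finset.mem_filter.1 he with ⟨_, h1, h2⟩
        have hres : res a f (e.2, e.1) = 0 := by
          by_contra hne
          exact h1 ((hmemS e.1).2 (((hmemS e.2).1 h2).tail
            (by simpa using pos_iff_ne_zero.2 hne)))
        unfold res at hres
        rcases add_eq_zero.1 hres with ⟨_, h4⟩
        exact_mod_cast h4
      have hkey := key f s S hsS fun v hv hvs =>
        hcons v hvs (fun h => htS (h ▸ hv))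
      rw [hEoi] at hkey
      exact ⟨f, hcap, hcons, by omega⟩

end MFMCaux

section
variable {V : Type*} [Fintype V] [DecidableEq V]

/-- Both directions of max-flow min-cut: if every `(s,t)`-cut has cost at least
`n` then some integer flow has value at least `n`; conversely the value of any
flow is a lower bound on the cost of every cut. -/
theorem stmt_19 (a : V × V → ℕ∞) (s t : V) (hst : s ≠ t) (n : ℕ) :
    ((∀ C : Finset (V × V), IsCut a s t C → (n : ℕ∞) ≤ cutCost a C) →
      ∃ f : V × V → ℕ, IsFlow a s t f ∧ n ≤ flowValue s f) ∧
    (∀ f : V × V → ℕ, IsFlow a s t f → flowValue s f = n →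
      ∀ C : Finset (V × V), IsCut a s t C → (n : ℕ∞) ≤ cutCost a C) := by
  open MFMCaux in
  constructor
  · intro hcut
    obtain ⟨f, hcap, hcons, hval⟩ := MFMCaux.main a s t hst n hcut
    refine ⟨f, ⟨fun v hs ht => hcons v hs ht, hcap⟩, ?_⟩
    have h1 : flowValue s f = MFMCaux.out f s - MFMCaux.inn f s := rfl
    omega
  · intro f hf hval C hC
    classical
    set S : Finset V :=
      Finset.univ.filter (fun v => Relation.ReflTransGen
        (fun u v => 0 < a (u, v) ∧ (u, v) ∉ C) s v) with hS
    have hmemS : ∀ v, v ∈ S ↔ Relation.ReflTransGen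
        (fun u v => 0 < a (u, v) ∧ (u, v) ∉ C) s v := by
      intro v; simp [hS]
    have hsS : s ∈ S := (hmemS s).2 Relation.ReflTransGen.refl
    have htS : t ∉ S := fun h => hC ((hmemS t).1 h)
    have hkey := MFMCaux.key f s S hsS fun v hv hvs =>
      hf.1 v hvs (fun h => htS (h ▸ hv))
    have hmemC : ∀ e ∈ MFMCaux.ecross S, f e ≠ 0 → e ∈ C := by
      intro e he hne
      rcases Finset.mem_filter.1 he with ⟨_, h1, h2⟩
      by_contra hnC
      have hapos : 0 < a (e.1, e.2) := by
        have : (1 : ℕ∞) ≤ (f e : ℕ∞) := by exact_mod_cast Nat.one_le_iff_ne_zero.2 hne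
        calc (0 : ℕ∞) < 1 := zero_lt_one
        _ ≤ (f e : ℕ∞) := this
        _ ≤ a e := hf.2 e
      exact h2 ((hmemS e.2).2 (((hmemS e.1).1 h1).tail ⟨hapos, by simpa using hnC⟩))
    have hEC : ∑ e ∈ MFMCaux.ecross S, f e ≤ ∑ e ∈ C, f e := by
      rw [← Finset.sum_filter_of_ne hmemC]
      exact Finset.sum_le_sum_of_subset (fun e he => (Finset.mem_filter.1 he).2)
    have hn : n ≤ ∑ e ∈ C, f e := by
      have h1 : flowValue s f = MFMCaux.out f s - MFMCaux.inn f s := rfl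
      omega
    calc (n : ℕ∞) ≤ ((∑ e ∈ C, f e : ℕ) : ℕ∞) := by exact_mod_cast hn
    _ = ∑ e ∈ C, (f e : ℕ∞) := MFMCaux.cast_sum_eq C f
    _ ≤ ∑ e ∈ C, a e := Finset.sum_le_sum fun e _ => hf.2 e
    _ = cutCost a C := rfl

end
end
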